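/- arXiv:1411.4193 — 2 statements merged into one kernel-verified Lean document; each statement's English description precedes it below -/
import Mathlib

section
/- Let 0 ≤ T' ≤ T and s₀ ≤ A < B. Then for every x ∈ ℝ: E[ 1_{H_A ≤ T'} · (S_{T'∧H_B} − x)⁺ ] + ( ℙ(H_A ≤ T) − ℙ(H_A ≤ T') ) · (A − x)⁺ ≤ E[ 1_{H_A ≤ T} · (S_{T∧H_B} − x)⁺ ]. -/
/-!
Extend `S` by constants outside `[0, T]` to a continuous martingale `X` on all of `ℝ`. Optional
sampling `∫_s X_τ = ∫_s X_T` for `s ∈ ℱ_τ` and real stopping times `τ ≤ T` follows from the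
countable-range case: rounding `τ` up to the grid `(T / (n + 1))ℤ` gives `X_{τₙ} = E[X_T | ℱ_{τₙ}]`,
which are uniformly integrable and converge to `X_τ` by path continuity, so Vitali's theorem
applies. Hitting times of `[L, ∞)` are stopping times because, by continuity and compactness,
"`[L, ∞)` is reached during `[0, r]`" is a countable intersection of countable unions of events
`{X_q > L - 1 / k}`.

Split `{H_A ≤ T}` into `{H_A ≤ T'}` and `D = {T' < H_A ≤ T}`. The first event lies in `ℱ_{T'}`,
and on it `(X_{t ∧ H_B} - x)⁺` grows in mean from `t = T'` to `t = T` since the stopped process is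
a martingale. On `D`, `X_{H_A} = A` and `H_A ≤ H_B`, so optional sampling gives
`E[X_{T ∧ H_B}; D] = A ℙ(D)`, and Jensen's inequality bounds `E[(X_{T ∧ H_B} - x)⁺; D]` below by
`(A - x)⁺ ℙ(D)`.
-/

open MeasureTheory Set Filter

noncomputable section

/-- The running maximum `M_T(ω) = sup_{t ∈ [0,T]} S_t(ω)`. -/
def runMax {Ω : Type} (S : ℝ → Ω → ℝ) (T : ℝ) (ω : Ω) : ℝ :=
  ⨆ t : Icc (0:ℝ) T, S t ω

/-- The stopped value `S_{T ∧ H_B}(ω)`, where `H_B` is the first hitting time of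
`[B, ∞)` by `S` during the time interval `[0,T]` (`= S_T(ω)` if `B` is not reached). -/
def stopVal {Ω : Type} (S : ℝ → Ω → ℝ) (B T : ℝ) (ω : Ω) : ℝ :=
  S (hittingBtwn S (Ici B) 0 T ω) ω

/-- The event `{H_B ≤ T}`: the level `B` is reached by `S` during `[0,T]`. -/
def hitEvent {Ω : Type} (S : ℝ → Ω → ℝ) (B T : ℝ) : Set Ω :=
  {ω | ∃ t ∈ Icc (0:ℝ) T, B ≤ S t ω}

/-- `S` is an adapted martingale on the time interval `[0,T]` with continuous sample
paths, a.s. (strictly) positive values, and initial value `s₀`. -/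
structure IsPosContMart {Ω : Type} [mΩ : MeasurableSpace Ω]
    (ℙ : Measure Ω) (ℱ : Filtration ℝ mΩ) (S : ℝ → Ω → ℝ) (s₀ T : ℝ) : Prop where
  adapted : ∀ t ∈ Icc (0:ℝ) T, StronglyMeasurable[ℱ t] (S t)
  integrable : ∀ t ∈ Icc (0:ℝ) T, Integrable (S t) ℙ
  mart : ∀ s t : ℝ, s ∈ Icc (0:ℝ) T → t ∈ Icc (0:ℝ) T → s ≤ t →
    ℙ[S t|ℱ s] =ᵐ[ℙ] S s
  contPaths : ∀ ω, ContinuousOn (fun t => S t ω) (Icc (0:ℝ) T)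
  pos : ∀ t ∈ Icc (0:ℝ) T, ∀ᵐ ω ∂ℙ, 0 < S t ω
  init : ∀ᵐ ω ∂ℙ, S 0 ω = s₀

open scoped Topology

namespace MeasureTheory

section HittingTime

variable {Ω ι β : Type*} [ConditionallyCompleteLinearOrder ι] {u : ι → Ω → β} {s : Set β}
  {ω : Ω} {n m : ι}

lemma hittingBtwn_congr {v : ι → Ω → β} (h : ∀ j ∈ Icc n m, u j ω = v j ω) :
    hittingBtwn u s n m ω = hittingBtwn v s n m ω := by
  have hset : Icc n m ∩ {i | u i ω ∈ s} = Icc n m ∩ {i | v i ω ∈ s} := by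
    ext i
    simp only [mem_inter_iff, mem_ofPred_eq, and_congr_right_iff]
    intro hi
    rw [h i hi]
  have hex : (∃ j ∈ Icc n m, u j ω ∈ s) ↔ ∃ j ∈ Icc n m, v j ω ∈ s :=
    exists_congr fun j => and_congr_right fun hj => by rw [h j hj]
  by_cases hu : ∃ j ∈ Icc n m, u j ω ∈ s
  · simp only [hittingBtwn, if_pos hu, if_pos (hex.1 hu), hset]
  · simp only [hittingBtwn, if_neg hu, if_neg (mt hex.2 hu)]

lemma hittingBtwn_eq_min {m' : ι} (hm' : m' ≤ m) :
    hittingBtwn u s n m' ω = min (hittingBtwn u s n m ω) m' := by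
  by_cases hex : ∃ j ∈ Icc n m', u j ω ∈ s
  · rw [← hittingBtwn_eq_hittingBtwn_of_exists hm' hex, min_eq_left (hittingBtwn_le ω)]
  · rw [hittingBtwn, if_neg hex, eq_comm, min_eq_right_iff, ← not_lt, hittingBtwn_lt_iff m' hm']
    exact fun ⟨j, hj, hjs⟩ => hex ⟨j, Ico_subset_Icc_self hj, hjs⟩

variable [TopologicalSpace ι] [OrderTopology ι] [TopologicalSpace β]

lemma hittingBtwn_mem_set_of_isClosed (hs : IsClosed s) (hu : ContinuousOn (u · ω) (Icc n m))
    (h : ∃ j ∈ Icc n m, u j ω ∈ s) : u (hittingBtwn u s n m ω) ω ∈ s := by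
  have hclosed : IsClosed (Icc n m ∩ {i | u i ω ∈ s}) :=
    hu.preimage_isClosed_of_isClosed isClosed_Icc hs
  obtain ⟨j, hj, hjs⟩ := h
  rw [hittingBtwn, if_pos ⟨j, hj, hjs⟩]
  exact (hclosed.csInf_mem ⟨j, hj, hjs⟩ bddBelow_Icc.inter_of_left).2

lemma hittingBtwn_le_iff_of_isClosed (hs : IsClosed s) (hu : ContinuousOn (u · ω) (Icc n m))
    {i : ι} (hi : i < m) : hittingBtwn u s n m ω ≤ i ↔ ∃ j ∈ Icc n i, u j ω ∈ s := by
  refine ⟨fun hle => ?_, fun ⟨j, hj, hjs⟩ =>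
    (hittingBtwn_le_of_mem hj.1 (hj.2.trans hi.le) hjs).trans hj.2⟩
  by_cases hex : ∃ j ∈ Icc n m, u j ω ∈ s
  · exact ⟨_, ⟨le_hittingBtwn_of_exists hex, hle⟩, hittingBtwn_mem_set_of_isClosed hs hu hex⟩
  · rw [hittingBtwn, if_neg hex] at hle
    exact absurd hle (not_le.2 hi)

variable [LinearOrder β] [OrderClosedTopology β] {L : β}

lemma exists_mem_Icc_le_iff_le_apply_hittingBtwn (hnm : n ≤ m)
    (hu : ContinuousOn (u · ω) (Icc n m)) :
    (∃ j ∈ Icc n m, L ≤ u j ω) ↔ L ≤ u (hittingBtwn u (Ici L) n m ω) ω :=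
  ⟨fun h => hittingBtwn_mem_set_of_isClosed isClosed_Ici hu h,
    fun h => ⟨_, hittingBtwn_mem_Icc hnm ω, h⟩⟩

lemma apply_hittingBtwn_le [DenselyOrdered ι] (hu : ContinuousOn (u · ω) (Icc n m))
    (hpos : n < hittingBtwn u (Ici L) n m ω) : u (hittingBtwn u (Ici L) n m ω) ω ≤ L := by
  set h := hittingBtwn u (Ici L) n m ω
  have hmem : h ∈ Icc n m := ⟨hpos.le, hittingBtwn_le ω⟩
  have hlim : Tendsto (u · ω) (𝓝[Ioo n h] h) (𝓝 (u h ω)) :=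
    (hu h hmem).mono (Ioo_subset_Icc_self.trans (Icc_subset_Icc_right hmem.2))
  have : (𝓝[Ioo n h] h).NeBot := right_nhdsWithin_Ioo_neBot hpos
  refine le_of_tendsto hlim (eventually_nhdsWithin_of_forall fun v hv => ?_)
  exact (not_le.1 (notMem_of_lt_hittingBtwn hv.2 hv.1.le)).le

end HittingTime

section Measurability

variable {Ω : Type*} {m : MeasurableSpace Ω}

lemma measurableSet_exists_le_of_continuous {X : Type*} [TopologicalSpace X] [CompactSpace X]
    [TopologicalSpace.SeparableSpace X] {g : X → Ω → ℝ} (hg : ∀ x, Measurable[m] (g x))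
    (hcont : ∀ ω, Continuous (g · ω)) (L : ℝ) : MeasurableSet[m] {ω | ∃ x, L ≤ g x ω} := by
  obtain ⟨C, hCc, hCd⟩ := TopologicalSpace.exists_countable_dense X
  have hset : {ω | ∃ x, L ≤ g x ω} = ⋂ k : ℕ, ⋃ c ∈ C, {ω | L - 1 / (k + 1) < g c ω} := by
    ext ω
    simp only [mem_ofPred_eq, mem_iInter, mem_iUnion, exists_prop]
    constructor
    · rintro ⟨x, hx⟩ k
      have hk : (0 : ℝ) < 1 / (k + 1) := by positivity
      exact hCd.exists_mem_open (isOpen_lt continuous_const (hcont ω))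
        ⟨x, show L - 1 / (k + 1) < g x ω by linarith⟩
    · intro h
      obtain ⟨c, -, -⟩ := h 0
      obtain ⟨x, -, hx⟩ := isCompact_univ.exists_isMaxOn ⟨c, mem_univ c⟩ (hcont ω).continuousOn
      refine ⟨x, le_of_forall_pos_lt_add fun ε hε => ?_⟩
      obtain ⟨k, hk⟩ := exists_nat_one_div_lt hε
      obtain ⟨c, -, hc⟩ := h k
      have hcx : g c ω ≤ g x ω := hx (mem_univ c)
      linarith
  rw [hset]
  exact .iInter fun k => .biUnion hCc fun c _ => measurableSet_lt measurable_const (hg c)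

variable {ℱ : Filtration ℝ m} {u : ℝ → Ω → ℝ}

lemma StronglyAdapted.measurableSet_exists_mem_Icc_le {n t : ℝ} (hu : StronglyAdapted ℱ u)
    (hcont : ∀ ω, ContinuousOn (u · ω) (Icc n t)) (L : ℝ) :
    MeasurableSet[ℱ t] {ω | ∃ j ∈ Icc n t, L ≤ u j ω} := by
  have := measurableSet_exists_le_of_continuous (X := Icc n t) (g := fun j => u j)
    (fun j => ((hu j).mono (ℱ.mono j.2.2)).measurable) (fun ω => (hcont ω).domRestrict) L
  simpa only [Subtype.exists, exists_prop] using this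

theorem StronglyAdapted.isStoppingTime_hittingBtwn_Ici {n t : ℝ} (hu : StronglyAdapted ℱ u)
    (hcont : ∀ ω, ContinuousOn (u · ω) (Icc n t)) (L : ℝ) (hnt : n ≤ t) :
    IsStoppingTime ℱ (fun ω => ((hittingBtwn u (Ici L) n t ω : ℝ) : WithTop ℝ)) := by
  intro r
  simp only [WithTop.coe_le_coe]
  rcases le_or_gt t r with htr | hrt
  · simp [(hittingBtwn_le _).trans htr]
  rcases lt_or_ge r n with hrn | hnr
  · have hempty : {ω | hittingBtwn u (Ici L) n t ω ≤ r} = ∅ :=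
      eq_empty_of_forall_notMem fun ω hω => (hrn.trans_le (le_hittingBtwn hnt ω)).not_ge hω
    rw [hempty]
    exact @MeasurableSet.empty _ (ℱ r)
  have hset : {ω | hittingBtwn u (Ici L) n t ω ≤ r} = {ω | ∃ j ∈ Icc n r, L ≤ u j ω} := by
    ext ω
    exact hittingBtwn_le_iff_of_isClosed isClosed_Ici (hcont ω) hrt
  rw [hset]
  exact StronglyAdapted.measurableSet_exists_mem_Icc_le hu
    (fun ω => (hcont ω).mono (Icc_subset_Icc_right hrt.le)) L

end Measurability

section CeilGrid

def ceilGrid (δ r : ℝ) : ℝ := δ * ⌈r / δ⌉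

variable {δ r t : ℝ}

lemma le_ceilGrid (hδ : 0 < δ) : r ≤ ceilGrid δ r := by
  rw [ceilGrid, ← div_le_iff₀' hδ]
  exact Int.le_ceil _

lemma ceilGrid_lt_add (hδ : 0 < δ) : ceilGrid δ r < r + δ := calc
  ceilGrid δ r < δ * (r / δ + 1) := by rw [ceilGrid]; gcongr; exact Int.ceil_lt_add_one _
  _ = r + δ := by field_simp

lemma ceilGrid_le_iff (hδ : 0 < δ) : ceilGrid δ r ≤ t ↔ r ≤ δ * ⌊t / δ⌋ := by
  rw [ceilGrid, ← le_div_iff₀' hδ, ← Int.le_floor, Int.ceil_le, div_le_iff₀' hδ]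

lemma mul_floor_div_le (hδ : 0 < δ) : δ * ⌊t / δ⌋ ≤ t := by
  rw [← le_div_iff₀' hδ]
  exact Int.floor_le _

lemma ceilGrid_div_le_of_le {T : ℝ} (hT : 0 < T) (hr : r ≤ T) (n : ℕ) :
    ceilGrid (T / (n + 1)) r ≤ T := by
  rw [ceilGrid_le_iff (by positivity), div_div_cancel₀ hT.ne', ← Nat.cast_add_one,
    ← Int.cast_natCast, Int.floor_intCast, Int.cast_natCast, div_mul_cancel₀ _ (by positivity)]
  exact hr

end CeilGrid

variable {Ω : Type*} {m : MeasurableSpace Ω} {ℱ : Filtration ℝ m} {τ : Ω → ℝ}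

lemma IsStoppingTime.ceilGrid {δ : ℝ} (hτ : IsStoppingTime ℱ (fun ω => (τ ω : WithTop ℝ)))
    (hδ : 0 < δ) : IsStoppingTime ℱ (fun ω => (ceilGrid δ (τ ω) : WithTop ℝ)) := by
  intro t
  have := hτ (δ * ⌊t / δ⌋)
  simp only [WithTop.coe_le_coe, ceilGrid_le_iff hδ] at this ⊢
  exact ℱ.mono (mul_floor_div_le hδ) _ this

section OptionalSampling

variable {μ : Measure Ω} [IsFiniteMeasure μ] {f : ℝ → Ω → ℝ} {T : ℝ}

lemma Martingale.ae_tendsto_condExp_ceilGrid (hf : Martingale f ℱ μ)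
    (hcont : ∀ ω t, ContinuousWithinAt (f · ω) (Ici t) t) (hT : 0 < T)
    (hτ : IsStoppingTime ℱ (fun ω => (τ ω : WithTop ℝ))) (hτT : ∀ ω, τ ω ≤ T) :
    ∀ᵐ ω ∂μ, Tendsto
      (fun n : ℕ => μ[f T | (hτ.ceilGrid (by positivity : 0 < T / (n + 1))).measurableSpace] ω)
      atTop (𝓝 (f (τ ω) ω)) := by
  have hae : ∀ n : ℕ, (fun ω => f (ceilGrid (T / (n + 1)) (τ ω)) ω)
      =ᵐ[μ] μ[f T | (hτ.ceilGrid (by positivity : 0 < T / (n + 1))).measurableSpace] := by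
    intro n
    refine hf.stoppedValue_ae_eq_condExp_of_le_const_of_countable_range _
      (fun ω => WithTop.coe_le_coe.2 (ceilGrid_div_le_of_le hT (hτT ω) n)) ?_
    refine (countable_range fun k : ℤ => ((T / (n + 1) * k : ℝ) : WithTop ℝ)).mono ?_
    rintro _ ⟨ω, rfl⟩
    exact ⟨_, rfl⟩
  filter_upwards [ae_all_iff.2 hae] with ω hω
  refine Tendsto.congr hω ((hcont ω (τ ω)).tendsto.comp (tendsto_nhdsWithin_iff.2 ⟨?_, ?_⟩))
  · have hδ : Tendsto (fun n : ℕ => T / (n + 1)) atTop (𝓝 0) :=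
      tendsto_const_div_atTop_nhds_zero_nat T |>.comp (tendsto_add_atTop_nat 1) |>.congr
        fun n => by simp
    refine tendsto_of_tendsto_of_tendsto_of_le_of_le tendsto_const_nhds
      (by simpa using hδ.const_add (τ ω)) (fun n => le_ceilGrid (by positivity))
      (fun n => (ceilGrid_lt_add (by positivity)).le)
  · exact Eventually.of_forall fun n => le_ceilGrid (by positivity)

lemma Martingale.integrable_stoppedValue_of_le_const (hf : Martingale f ℱ μ)
    (hcont : ∀ ω t, ContinuousWithinAt (f · ω) (Ici t) t) (hT : 0 < T)
    (hτ : IsStoppingTime ℱ (fun ω => (τ ω : WithTop ℝ))) (hτT : ∀ ω, τ ω ≤ T) :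
    Integrable (fun ω => f (τ ω) ω) μ :=
  ((hf.integrable T).uniformIntegrable_condExp fun _ => IsStoppingTime.measurableSpace_le _)
    |>.integrable_of_ae_tendsto (hf.ae_tendsto_condExp_ceilGrid hcont hT hτ hτT)

theorem Martingale.setIntegral_stoppedValue_of_le_const (hf : Martingale f ℱ μ)
    (hcont : ∀ ω t, ContinuousWithinAt (f · ω) (Ici t) t) (hT : 0 < T)
    (hτ : IsStoppingTime ℱ (fun ω => (τ ω : WithTop ℝ))) (hτT : ∀ ω, τ ω ≤ T) {s : Set Ω}
    (hs : MeasurableSet[hτ.measurableSpace] s) :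
    ∫ ω in s, f (τ ω) ω ∂μ = ∫ ω in s, f T ω ∂μ := by
  have hτn (n : ℕ) := hτ.ceilGrid (by positivity : 0 < T / (n + 1))
  have hui := (hf.integrable T).uniformIntegrable_condExp fun n => (hτn n).measurableSpace_le
  have hlim := hf.ae_tendsto_condExp_ceilGrid (μ := μ) hcont hT hτ hτT
  have hint := hf.integrable_stoppedValue_of_le_const (μ := μ) hcont hT hτ hτT
  have hL1 := tendsto_Lp_finite_of_tendsto_ae le_rfl ENNReal.one_ne_top hui.1
    (memLp_one_iff_integrable.2 hint) hui.2.1 hlim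
  refine tendsto_nhds_unique
    (tendsto_setIntegral_of_L1' _ hint.1 (.of_forall fun _ => integrable_condExp) hL1 s) ?_
  refine tendsto_const_nhds.congr fun n => (setIntegral_condExp (hτn n).measurableSpace_le
    (hf.integrable T) ?_).symm
  exact hτ.measurableSpace_mono (hτn n)
    (fun ω => WithTop.coe_le_coe.2 (le_ceilGrid (by positivity))) s hs

end OptionalSampling

section StoppedMartingale

variable {μ : Measure Ω} [IsFiniteMeasure μ] {f : ℝ → Ω → ℝ} {T t : ℝ}

lemma IsStoppingTime.min_const_real (hτ : IsStoppingTime ℱ (fun ω => (τ ω : WithTop ℝ))) (t : ℝ) :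
    IsStoppingTime ℱ (fun ω => ((min (τ ω) t : ℝ) : WithTop ℝ)) := by
  simpa only [WithTop.coe_min] using hτ.min_const t

theorem Martingale.setIntegral_stoppedValue_min_const (hf : Martingale f ℱ μ)
    (hcont : ∀ ω t, ContinuousWithinAt (f · ω) (Ici t) t) (hT : 0 < T)
    (hτ : IsStoppingTime ℱ (fun ω => (τ ω : WithTop ℝ))) (hτT : ∀ ω, τ ω ≤ T) (htT : t ≤ T)
    {s : Set Ω} (hs : MeasurableSet[ℱ t] s) :
    ∫ ω in s, f (min (τ ω) t) ω ∂μ = ∫ ω in s, f (τ ω) ω ∂μ := by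
  have hlate : MeasurableSet[ℱ t] {ω | t ≤ τ ω} := by
    simpa only [compl_ofPred, not_lt, WithTop.coe_le_coe] using (hτ.measurableSet_lt t).compl
  have hlateτ : MeasurableSet[hτ.measurableSpace] (s ∩ {ω | t ≤ τ ω}) := by
    have := (isStoppingTime_const ℱ t).measurableSet_inter_le hτ s
      (by rwa [IsStoppingTime.measurableSpace_const])
    simp only [WithTop.coe_le_coe] at this
    exact ((isStoppingTime_const ℱ t).min hτ).measurableSpace_mono hτ
      (fun ω => min_le_right _ _) _ this
  have hmeas := ℱ.le t _ hlate
  have hmin := hτ.min_const_real t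
  have hYmin := hf.integrable_stoppedValue_of_le_const (μ := μ) hcont hT hmin
    fun ω => (min_le_right _ _).trans htT
  have hYτ := hf.integrable_stoppedValue_of_le_const (μ := μ) hcont hT hτ hτT
  rw [← integral_inter_add_sdiff hmeas hYmin.integrableOn,
    ← integral_inter_add_sdiff hmeas hYτ.integrableOn]
  congr 1
  · calc ∫ ω in s ∩ {ω | t ≤ τ ω}, f (min (τ ω) t) ω ∂μ
        = ∫ ω in s ∩ {ω | t ≤ τ ω}, f t ω ∂μ :=
          setIntegral_congr_fun (ℱ.le t _ (hs.inter hlate)) fun ω hω => by rw [min_eq_right hω.2]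
      _ = ∫ ω in s ∩ {ω | t ≤ τ ω}, f T ω ∂μ := hf.setIntegral_eq htT (hs.inter hlate)
      _ = ∫ ω in s ∩ {ω | t ≤ τ ω}, f (τ ω) ω ∂μ :=
          (hf.setIntegral_stoppedValue_of_le_const hcont hT hτ hτT hlateτ).symm
  · refine setIntegral_congr_fun ((ℱ.le t _ hs).diff hmeas) fun ω hω => ?_
    rw [min_eq_left (not_le.1 hω.2).le]

theorem Martingale.setIntegral_max_sub_stoppedValue_min_const_le (hf : Martingale f ℱ μ)
    (hcont : ∀ ω, Continuous (f · ω)) (hT : 0 < T)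
    (hτ : IsStoppingTime ℱ (fun ω => (τ ω : WithTop ℝ))) (hτT : ∀ ω, τ ω ≤ T) (htT : t ≤ T)
    {s : Set Ω} (hs : MeasurableSet[ℱ t] s) (x : ℝ) :
    ∫ ω in s, max (f (min (τ ω) t) ω - x) 0 ∂μ ≤ ∫ ω in s, max (f (τ ω) ω - x) 0 ∂μ := by
  have hrc : ∀ ω t, ContinuousWithinAt (f · ω) (Ici t) t :=
    fun ω t => (hcont ω).continuousWithinAt
  have hmin := hτ.min_const_real t
  have hYt : StronglyMeasurable[ℱ t] (fun ω => f (min (τ ω) t) ω) :=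
    stronglyMeasurable_stoppedValue_of_le
      (hf.stronglyAdapted.isStronglyProgressive_of_continuous hcont) hmin
      fun ω => WithTop.coe_le_coe.2 (min_le_right _ _)
  have hgain : MeasurableSet[ℱ t] {ω | x < f (min (τ ω) t) ω} :=
    measurableSet_lt measurable_const hYt.measurable
  set s' := s ∩ {ω | x < f (min (τ ω) t) ω}
  have hYmin := hf.integrable_stoppedValue_of_le_const (μ := μ) hrc hT hmin
    fun ω => (min_le_right _ _).trans htT
  have hYτ := hf.integrable_stoppedValue_of_le_const (μ := μ) hrc hT hτ hτT
  have hY := hYτ.sub (integrable_const x)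
  calc ∫ ω in s, max (f (min (τ ω) t) ω - x) 0 ∂μ
      = ∫ ω in s', (f (min (τ ω) t) ω - x) ∂μ := by
        rw [← setIntegral_indicator (ℱ.le t _ hgain)]
        congr 1 with ω
        by_cases h : x < f (min (τ ω) t) ω
        · simp [h, h.le]
        · simp [h, not_lt.1 h]
    _ = ∫ ω in s', (f (τ ω) ω - x) ∂μ := by
        rw [integral_sub hYmin.integrableOn (integrable_const x).integrableOn,
          integral_sub hYτ.integrableOn (integrable_const x).integrableOn,
          hf.setIntegral_stoppedValue_min_const hrc hT hτ hτT htT (hs.inter hgain)]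
    _ ≤ ∫ ω in s', max (f (τ ω) ω - x) 0 ∂μ :=
        setIntegral_mono hY.integrableOn hY.pos_part.integrableOn fun ω => le_max_left _ _
    _ ≤ ∫ ω in s, max (f (τ ω) ω - x) 0 ∂μ :=
        setIntegral_mono_set hY.pos_part.integrableOn (.of_forall fun ω => le_max_right _ _)
          (.of_forall inter_subset_left)

end StoppedMartingale

lemma measureReal_mul_max_sub_le_setIntegral {μ : Measure Ω} [IsFiniteMeasure μ] {g : Ω → ℝ}
    {s : Set Ω} {a : ℝ} (hg : IntegrableOn g s μ) (h : ∫ ω in s, g ω ∂μ = μ.real s * a) (x : ℝ) :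
    μ.real s * max (a - x) 0 ≤ ∫ ω in s, max (g ω - x) 0 ∂μ := by
  rcases le_total a x with hax | hxa
  · rw [max_eq_right (sub_nonpos.2 hax), mul_zero]
    exact integral_nonneg fun ω => le_max_right _ _
  · rw [max_eq_left (sub_nonneg.2 hxa)]
    calc μ.real s * (a - x) = ∫ ω in s, (g ω - x) ∂μ := by
          rw [integral_sub hg integrableOn_const, h, setIntegral_const, smul_eq_mul]; ring
      _ ≤ ∫ ω in s, max (g ω - x) 0 ∂μ :=
          integral_mono (hg.sub integrableOn_const) (hg.sub integrableOn_const).pos_part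
            fun ω => le_max_left _ _

section HittingLevels

variable {μ : Measure Ω} [IsFiniteMeasure μ] {f : ℝ → Ω → ℝ} {T T' A B : ℝ}

theorem Martingale.setIntegral_hittingBtwn_sdiff (hf : Martingale f ℱ μ)
    (hcont : ∀ ω, Continuous (f · ω)) (hT : 0 < T) (hT'0 : 0 ≤ T') (hT' : T' ≤ T) (hAB : A ≤ B) :
    ∫ ω in {ω | ∃ j ∈ Icc 0 T, A ≤ f j ω} \ {ω | ∃ j ∈ Icc 0 T', A ≤ f j ω},
        f (hittingBtwn f (Ici B) 0 T ω) ω ∂μ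
      = μ.real ({ω | ∃ j ∈ Icc 0 T, A ≤ f j ω} \ {ω | ∃ j ∈ Icc 0 T', A ≤ f j ω}) * A := by
  set D := {ω | ∃ j ∈ Icc 0 T, A ≤ f j ω} \ {ω | ∃ j ∈ Icc 0 T', A ≤ f j ω}
  have hrc : ∀ ω t, ContinuousWithinAt (f · ω) (Ici t) t :=
    fun ω t => (hcont ω).continuousWithinAt
  have hprog := hf.stronglyAdapted.isStronglyProgressive_of_continuous hcont
  have hτA := StronglyAdapted.isStoppingTime_hittingBtwn_Ici hf.stronglyAdapted
    (fun ω => (hcont ω).continuousOn) A hT.le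
  have hτB := StronglyAdapted.isStoppingTime_hittingBtwn_Ici hf.stronglyAdapted
    (fun ω => (hcont ω).continuousOn) B hT.le
  have hτA' := hτA.min_const_real T'
  have hhit (t : ℝ) (ht : 0 ≤ t) : {ω | ∃ j ∈ Icc 0 t, A ≤ f j ω}
      = {ω | A ≤ f (hittingBtwn f (Ici A) 0 t ω) ω} := by
    ext ω
    exact exists_mem_Icc_le_iff_le_apply_hittingBtwn ht (hcont ω).continuousOn
  have hDA : MeasurableSet[hτA.measurableSpace] D := by
    simp only [D, hhit T hT.le, hhit T' hT'0, hittingBtwn_eq_min hT']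
    refine (measurableSet_le measurable_const (measurable_stoppedValue hprog hτA)).diff ?_
    exact hτA'.measurableSpace_mono hτA (fun ω => WithTop.coe_le_coe.2 (min_le_left _ _)) _
      (measurableSet_le measurable_const (measurable_stoppedValue hprog hτA'))
  have hDB : MeasurableSet[hτB.measurableSpace] D := hτA.measurableSpace_mono hτB
    (fun ω => WithTop.coe_le_coe.2 (hittingBtwn_anti f 0 T (Ici_subset_Ici.2 hAB) ω)) _ hDA
  have hval : ∀ ω ∈ D, f (hittingBtwn f (Ici A) 0 T ω) ω = A := by
    rintro ω ⟨hhitT, hnohitT'⟩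
    have hA := hittingBtwn_mem_set_of_isClosed isClosed_Ici (hcont ω).continuousOn hhitT
    have hlate : T' < hittingBtwn f (Ici A) 0 T ω :=
      lt_of_not_ge fun h => hnohitT' ⟨_, ⟨le_hittingBtwn hT.le ω, h⟩, hA⟩
    exact le_antisymm (apply_hittingBtwn_le (hcont ω).continuousOn (hT'0.trans_lt hlate)) hA
  calc ∫ ω in D, f (hittingBtwn f (Ici B) 0 T ω) ω ∂μ
      = ∫ ω in D, f T ω ∂μ :=
        hf.setIntegral_stoppedValue_of_le_const hrc hT hτB (fun ω => hittingBtwn_le ω) hDB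
    _ = ∫ ω in D, f (hittingBtwn f (Ici A) 0 T ω) ω ∂μ :=
        (hf.setIntegral_stoppedValue_of_le_const hrc hT hτA (fun ω => hittingBtwn_le ω) hDA).symm
    _ = μ.real D * A := by
        rw [setIntegral_congr_fun (hτA.measurableSpace_le _ hDA) hval, setIntegral_const,
          smul_eq_mul]

theorem Martingale.setIntegral_max_sub_hittingBtwn_le (hf : Martingale f ℱ μ)
    (hcont : ∀ ω, Continuous (f · ω)) (hT : 0 < T) (hT'0 : 0 ≤ T') (hT' : T' ≤ T) (hAB : A ≤ B)
    (x : ℝ) :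
    ∫ ω in {ω | ∃ j ∈ Icc 0 T', A ≤ f j ω}, max (f (hittingBtwn f (Ici B) 0 T' ω) ω - x) 0 ∂μ
        + (μ.real {ω | ∃ j ∈ Icc 0 T, A ≤ f j ω} - μ.real {ω | ∃ j ∈ Icc 0 T', A ≤ f j ω})
          * max (A - x) 0
      ≤ ∫ ω in {ω | ∃ j ∈ Icc 0 T, A ≤ f j ω},
          max (f (hittingBtwn f (Ici B) 0 T ω) ω - x) 0 ∂μ := by
  set E := {ω | ∃ j ∈ Icc 0 T, A ≤ f j ω}
  set E' := {ω | ∃ j ∈ Icc 0 T', A ≤ f j ω}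
  have hrc : ∀ ω t, ContinuousWithinAt (f · ω) (Ici t) t :=
    fun ω t => (hcont ω).continuousWithinAt
  have hE' : MeasurableSet[ℱ T'] E' :=
    StronglyAdapted.measurableSet_exists_mem_Icc_le hf.stronglyAdapted
      (fun ω => (hcont ω).continuousOn) A
  have hE'E : E' ⊆ E := fun ω ⟨j, hj, h⟩ => ⟨j, ⟨hj.1, hj.2.trans hT'⟩, h⟩
  have hτB := StronglyAdapted.isStoppingTime_hittingBtwn_Ici hf.stronglyAdapted
    (fun ω => (hcont ω).continuousOn) B hT.le
  have hYB := hf.integrable_stoppedValue_of_le_const (μ := μ) hrc hT hτB fun ω => hittingBtwn_le ω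
  have hbefore := hf.setIntegral_max_sub_stoppedValue_min_const_le hcont hT hτB
    (fun ω => hittingBtwn_le ω) hT' hE' x
  have hafter := measureReal_mul_max_sub_le_setIntegral hYB.integrableOn
    (hf.setIntegral_hittingBtwn_sdiff hcont hT hT'0 hT' hAB) x
  simp only [← hittingBtwn_eq_min hT'] at hbefore
  have hpos : Integrable (fun ω => max (f (hittingBtwn f (Ici B) 0 T ω) ω - x) 0) μ :=
    (hYB.sub (integrable_const x)).pos_part
  rw [← integral_inter_add_sdiff (ℱ.le T' _ hE') hpos.integrableOn,
    inter_eq_right.2 hE'E, ← measureReal_sdiff hE'E (ℱ.le T' _ hE')]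
  linarith

end HittingLevels

end MeasureTheory

section Clamp

variable {Ω : Type} {T : ℝ}

def clampedProcess (S : ℝ → Ω → ℝ) (hT : 0 ≤ T) : ℝ → Ω → ℝ :=
  fun t => S (projIcc 0 T hT t)

lemma clampedProcess_of_mem {S : ℝ → Ω → ℝ} (hT : 0 ≤ T) {t : ℝ} (ht : t ∈ Icc 0 T) :
    clampedProcess S hT t = S t := by
  rw [clampedProcess, projIcc_of_mem hT ht]

lemma hitEvent_eq_clampedProcess {S : ℝ → Ω → ℝ} (hT : 0 ≤ T) {L t : ℝ} (ht : t ≤ T) :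
    hitEvent S L t = {ω | ∃ j ∈ Icc 0 t, L ≤ clampedProcess S hT j ω} := by
  ext ω
  refine exists_congr fun j => and_congr_right fun hj => ?_
  rw [clampedProcess_of_mem hT ⟨hj.1, hj.2.trans ht⟩]

lemma stopVal_eq_clampedProcess {S : ℝ → Ω → ℝ} (hT : 0 ≤ T) {B t : ℝ} (ht0 : 0 ≤ t)
    (ht : t ≤ T) :
    stopVal S B t
      = fun ω => clampedProcess S hT (hittingBtwn (clampedProcess S hT) (Ici B) 0 t ω) ω := by
  ext ω
  rw [stopVal, hittingBtwn_congr fun j hj =>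
      congrFun (clampedProcess_of_mem hT ⟨hj.1, hj.2.trans ht⟩) ω,
    clampedProcess_of_mem hT ⟨le_hittingBtwn ht0 ω, (hittingBtwn_le ω).trans ht⟩]

variable [mΩ : MeasurableSpace Ω]

def clampedFiltration (ℱ : Filtration ℝ mΩ) (hT : 0 ≤ T) : Filtration ℝ mΩ where
  seq t := ℱ (projIcc 0 T hT t)
  mono' _ _ hst := ℱ.mono (monotone_projIcc hT hst)
  le' _ := ℱ.le _

variable {ℙ : Measure Ω} {ℱ : Filtration ℝ mΩ} {S : ℝ → Ω → ℝ} {s₀ : ℝ}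

lemma IsPosContMart.continuous_clampedProcess (hS : IsPosContMart ℙ ℱ S s₀ T) (hT : 0 ≤ T)
    (ω : Ω) : Continuous (clampedProcess S hT · ω) :=
  (hS.contPaths ω).comp_continuous (continuous_subtype_val.comp continuous_projIcc)
    fun t => (projIcc 0 T hT t).2

lemma IsPosContMart.martingale_clampedProcess (hS : IsPosContMart ℙ ℱ S s₀ T) (hT : 0 ≤ T) :
    Martingale (clampedProcess S hT) (clampedFiltration ℱ hT) ℙ :=
  ⟨fun t => hS.adapted _ (projIcc 0 T hT t).2, fun _ _ hst =>
    hS.mart _ _ (projIcc 0 T hT _).2 (projIcc 0 T hT _).2 (monotone_projIcc hT hst)⟩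

end Clamp

theorem stmt_15_general {Ω : Type} [mΩ : MeasurableSpace Ω] (ℙ : Measure Ω) [IsProbabilityMeasure ℙ]
    (ℱ : Filtration ℝ mΩ) (S : ℝ → Ω → ℝ) (s₀ T : ℝ) (hT : 0 < T)
    (hS : IsPosContMart ℙ ℱ S s₀ T) (T' : ℝ) (hT'0 : 0 ≤ T') (hT' : T' ≤ T)
    (A B : ℝ) (hAB : A < B) :
    ∀ x : ℝ,
      (∫ ω in hitEvent S A T', max (stopVal S B T' ω - x) 0 ∂ℙ)
          + ((ℙ (hitEvent S A T)).toReal - (ℙ (hitEvent S A T')).toReal) * max (A - x) 0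
        ≤ ∫ ω in hitEvent S A T, max (stopVal S B T ω - x) 0 ∂ℙ := by
  intro x
  rw [hitEvent_eq_clampedProcess hT.le hT', hitEvent_eq_clampedProcess hT.le le_rfl,
    stopVal_eq_clampedProcess hT.le hT'0 hT', stopVal_eq_clampedProcess hT.le hT.le le_rfl]
  exact (hS.martingale_clampedProcess hT.le).setIntegral_max_sub_hittingBtwn_le
    (hS.continuous_clampedProcess hT.le) hT hT'0 hT' hAB.le x

/-- For `0 ≤ T' ≤ T`, `s₀ ≤ A < B` and every `x`,
`E[1_{H_A ≤ T'}·(S_{T'∧H_B} − x)⁺] + (ℙ(H_A ≤ T) − ℙ(H_A ≤ T'))·(A − x)⁺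
  ≤ E[1_{H_A ≤ T}·(S_{T∧H_B} − x)⁺]`. -/
theorem stmt_15 {Ω : Type} [mΩ : MeasurableSpace Ω] (ℙ : Measure Ω) [IsProbabilityMeasure ℙ]
    (ℱ : Filtration ℝ mΩ) (S : ℝ → Ω → ℝ) (s₀ T : ℝ) (hs₀ : 0 < s₀) (hT : 0 < T)
    (hS : IsPosContMart ℙ ℱ S s₀ T) (T' : ℝ) (hT'0 : 0 ≤ T') (hT' : T' ≤ T)
    (A B : ℝ) (hA : s₀ ≤ A) (hAB : A < B) :
    ∀ x : ℝ,
      (∫ ω in hitEvent S A T', max (stopVal S B T' ω - x) 0 ∂ℙ)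
          + ((ℙ (hitEvent S A T)).toReal - (ℙ (hitEvent S A T')).toReal) * max (A - x) 0
        ≤ ∫ ω in hitEvent S A T, max (stopVal S B T ω - x) 0 ∂ℙ :=
  stmt_15_general (mΩ := mΩ) ℙ ℱ S s₀ T hT hS T' hT'0 hT' A B hAB
end
end

section
/- Let B > s₀. Then E[ S_T · 1_{M_T ≥ B} ] = B · ℙ(M_T ≥ B). -/
/-!
Optional stopping at a first passage. Fix a level `C` with `s₀ < C`, and on the dyadic grid
`k T / 2 ^ n` stop at the first grid time where `S` exceeds `C`. By the martingale property,
`∫ S_T` over each first-crossing event equals the integral of the stopped value, which is `> C`,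
and, by uniform continuity of the paths, `≤ C + ε` except on an overshoot event whose `S_T`-mass
tends to `0`. As `n → ∞` the grid-crossing events converge to `{M_T > C}`, so
`E[S_T; M_T > C] = C ℙ(M_T > C)`. Letting `C ↑ B` gives the claim, as `{M_T ≥ B} = ⋂ {M_T > C}`.
-/

open MeasureTheory Set Filter

noncomputable section

/-- `S` is an adapted martingale on the time interval `[0,T]` with continuous sample
paths, a.s. nonnegative values, and initial value `s₀`. -/
structure IsNonnegContMart {Ω : Type} [mΩ : MeasurableSpace Ω]
    (ℙ : Measure Ω) (ℱ : Filtration ℝ mΩ) (S : ℝ → Ω → ℝ) (s₀ T : ℝ) : Prop where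
  adapted : ∀ t ∈ Icc (0:ℝ) T, StronglyMeasurable[ℱ t] (S t)
  integrable : ∀ t ∈ Icc (0:ℝ) T, Integrable (S t) ℙ
  mart : ∀ s t : ℝ, s ∈ Icc (0:ℝ) T → t ∈ Icc (0:ℝ) T → s ≤ t →
    ℙ[S t|ℱ s] =ᵐ[ℙ] S s
  contPaths : ∀ ω, ContinuousOn (fun t => S t ω) (Icc (0:ℝ) T)
  nonneg : ∀ t ∈ Icc (0:ℝ) T, ∀ᵐ ω ∂ℙ, 0 ≤ S t ω
  init : ∀ᵐ ω ∂ℙ, S 0 ω = s₀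

open Function
open scoped Topology

theorem tendsto_setIntegral_of_ae_eventually_mem_iff {α E ι : Type*} [MeasurableSpace α]
    [NormedAddCommGroup E] [NormedSpace ℝ E] {μ : Measure α} {l : Filter ι}
    [l.IsCountablyGenerated] {A : ι → Set α} {L : Set α} {g : α → E}
    (hA : ∀ i, MeasurableSet (A i)) (hg : Integrable g μ)
    (h_lim : ∀ᵐ x ∂μ, ∀ᶠ i in l, x ∈ A i ↔ x ∈ L) :
    Tendsto (fun i => ∫ x in A i, g x ∂μ) l (𝓝 (∫ x in L, g x ∂μ)) := by
  rcases l.eq_or_neBot with rfl | _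
  · exact tendsto_bot
  have hL := nullMeasurableSet_of_tendsto_indicator l (fun i => (hA i).nullMeasurableSet) h_lim
  simp_rw [← integral_indicator (hA _), ← integral_indicator₀ hL]
  refine tendsto_integral_filter_of_dominated_convergence (‖g ·‖)
    (Eventually.of_forall fun i => hg.aestronglyMeasurable.indicator (hA i))
    (Eventually.of_forall fun i => ae_of_all _ fun x => norm_indicator_le_norm_self g x)
    hg.norm ?_
  filter_upwards [h_lim] with x hx
  refine tendsto_const_nhds.congr' ?_
  filter_upwards [hx] with i hi
  by_cases h : x ∈ L
  · rw [indicator_of_mem h, indicator_of_mem (hi.2 h)]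
  · rw [indicator_of_notMem h, indicator_of_notMem (mt hi.1 h)]

theorem tendsto_measureReal_of_ae_eventually_mem_iff {α ι : Type*} [MeasurableSpace α]
    {μ : Measure α} [IsFiniteMeasure μ] {l : Filter ι} [l.IsCountablyGenerated]
    {A : ι → Set α} {L : Set α} (hA : ∀ i, MeasurableSet (A i))
    (h_lim : ∀ᵐ x ∂μ, ∀ᶠ i in l, x ∈ A i ↔ x ∈ L) :
    Tendsto (fun i => μ.real (A i)) l (𝓝 (μ.real L)) := by
  simpa using tendsto_setIntegral_of_ae_eventually_mem_iff hA (integrable_const (1 : ℝ)) h_lim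

theorem eventually_lt_iff_le_of_tendsto {α ι : Type*} [LinearOrder α] [TopologicalSpace α]
    [OrderTopology α] {l : Filter ι} {u : ι → α} {b : α} (hu : Tendsto u l (𝓝 b))
    (hlt : ∀ i, u i < b) (x : α) : ∀ᶠ i in l, u i < x ↔ b ≤ x := by
  rcases le_or_gt b x with h | h
  · exact Eventually.of_forall fun i => iff_of_true ((hlt i).trans_le h) h
  · filter_upwards [hu.eventually (lt_mem_nhds h)] with i hi
    exact iff_of_false (lt_asymm hi) h.not_ge

def dyadicPt (T : ℝ) (n k : ℕ) : ℝ := k * T / 2 ^ n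

section Dyadic

variable {T : ℝ}

lemma dyadicPt_zero (T : ℝ) (n : ℕ) : dyadicPt T n 0 = 0 := by
  simp [dyadicPt]

lemma dyadicPt_succ (T : ℝ) (n k : ℕ) : dyadicPt T n (k + 1) = dyadicPt T n k + T / 2 ^ n := by
  simp only [dyadicPt]
  push_cast
  ring

lemma dyadicPt_mono (hT : 0 ≤ T) (n : ℕ) : Monotone (dyadicPt T n) := fun _ _ h => by
  unfold dyadicPt
  gcongr

lemma dyadicPt_mem_Icc (hT : 0 ≤ T) {n k : ℕ} (hk : k ≤ 2 ^ n) : dyadicPt T n k ∈ Icc 0 T := by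
  refine ⟨by unfold dyadicPt; positivity, ?_⟩
  rw [dyadicPt, div_le_iff₀ (by positivity)]
  have : (k : ℝ) ≤ 2 ^ n := by exact_mod_cast hk
  nlinarith

lemma tendsto_div_two_pow_atTop (T : ℝ) : Tendsto (fun n : ℕ => T / 2 ^ n) atTop (𝓝 0) :=
  tendsto_const_nhds.div_atTop (tendsto_pow_atTop_atTop_of_one_lt one_lt_two)

lemma floor_mul_two_pow_div_le (hT : 0 < T) {t : ℝ} (ht : t ≤ T) (n : ℕ) :
    ⌊t * 2 ^ n / T⌋₊ ≤ 2 ^ n := by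
  apply Nat.floor_le_of_le
  rw [div_le_iff₀ hT]
  push_cast
  nlinarith [pow_pos (two_pos (α := ℝ)) n]

lemma tendsto_dyadicPt_floor (hT : 0 < T) {t : ℝ} (ht : 0 ≤ t) :
    Tendsto (fun n : ℕ => dyadicPt T n ⌊t * 2 ^ n / T⌋₊) atTop (𝓝 t) := by
  refine tendsto_of_tendsto_of_tendsto_of_le_of_le
    (by simpa using tendsto_const_nhds.sub (tendsto_div_two_pow_atTop T))
    tendsto_const_nhds (fun n => ?_) (fun n => ?_)
  · have h2 : (0 : ℝ) < 2 ^ n := by positivity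
    have := Nat.lt_floor_add_one (t * 2 ^ n / T)
    rw [div_lt_iff₀ hT] at this
    rw [dyadicPt, sub_le_iff_le_add, ← add_div, le_div_iff₀ h2]
    linarith
  · have h2 : (0 : ℝ) < 2 ^ n := by positivity
    have := Nat.floor_le (show 0 ≤ t * 2 ^ n / T by positivity)
    rw [le_div_iff₀ hT] at this
    rw [dyadicPt, div_le_iff₀ h2]
    linarith

variable {f : ℝ → ℝ} {C : ℝ}

lemma eventually_exists_dyadicPt_gt (hT : 0 < T) (hf : ContinuousOn f (Icc 0 T)) {t : ℝ}
    (ht : t ∈ Icc 0 T) (hCt : C < f t) :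
    ∀ᶠ n in atTop, ∃ k ≤ 2 ^ n, C < f (dyadicPt T n k) := by
  have hk := floor_mul_two_pow_div_le hT ht.2
  have hlim : Tendsto (fun n => f (dyadicPt T n ⌊t * 2 ^ n / T⌋₊)) atTop (𝓝 (f t)) :=
    (hf t ht).tendsto.comp <| tendsto_nhdsWithin_iff.2
      ⟨tendsto_dyadicPt_floor hT ht.1, Eventually.of_forall fun n => dyadicPt_mem_Icc hT.le (hk n)⟩
  filter_upwards [hlim.eventually (lt_mem_nhds hCt)] with n hn
  exact ⟨_, hk n, hn⟩

/-- Once the mesh `T / 2 ^ n` is below the modulus of uniform continuity for `ε`, the step into the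
first crossing starts from a grid value `≤ C` and so raises the path by less than `ε`. -/
lemma eventually_first_crossing_le (hT : 0 < T) (hf : ContinuousOn f (Icc 0 T)) (hf0 : f 0 ≤ C)
    {ε : ℝ} (hε : 0 < ε) :
    ∀ᶠ n in atTop, ∀ k ≤ 2 ^ n, C < f (dyadicPt T n k) →
      (∀ j < k, f (dyadicPt T n j) ≤ C) → f (dyadicPt T n k) ≤ C + ε := by
  obtain ⟨δ, hδ, hfδ⟩ :=
    Metric.uniformContinuousOn_iff.1 (isCompact_Icc.uniformContinuousOn_of_continuous hf) ε hε
  filter_upwards [(tendsto_div_two_pow_atTop T).eventually (gt_mem_nhds hδ)] with n hn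
  rintro (_ | j) hk hcross hfirst
  · rw [dyadicPt_zero] at hcross
    linarith
  · have hdist : dist (dyadicPt T n (j + 1)) (dyadicPt T n j) < δ := by
      rwa [dyadicPt_succ, Real.dist_eq, add_sub_cancel_left, abs_of_pos (by positivity)]
    have hclose := hfδ _ (dyadicPt_mem_Icc hT.le hk) _ (dyadicPt_mem_Icc hT.le (by omega)) hdist
    rw [Real.dist_eq, abs_lt] at hclose
    linarith [hfirst j j.lt_succ_self]

end Dyadic

section Crossing

variable {Ω : Type} {S : ℝ → Ω → ℝ} {T C : ℝ} {n : ℕ} {ω : Ω}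

def firstCrossing (S : ℝ → Ω → ℝ) (T C : ℝ) (n k : ℕ) : Set Ω :=
  {ω | C < S (dyadicPt T n k) ω ∧ ∀ j < k, S (dyadicPt T n j) ω ≤ C}

def gridCrossing (S : ℝ → Ω → ℝ) (T C : ℝ) (n : ℕ) : Set Ω :=
  ⋃ k ∈ Finset.Iic (2 ^ n), firstCrossing S T C n k

def gridOvershoot (S : ℝ → Ω → ℝ) (T C ε : ℝ) (n : ℕ) : Set Ω :=
  ⋃ k ∈ Finset.Iic (2 ^ n), firstCrossing S T C n k ∩ {ω | C + ε < S (dyadicPt T n k) ω}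

lemma pairwise_disjoint_firstCrossing (S : ℝ → Ω → ℝ) (T C : ℝ) (n : ℕ) :
    Pairwise (Disjoint on firstCrossing S T C n) := by
  intro k k' hne
  wlog h : k < k' generalizing k k'
  · exact (this hne.symm (by omega)).symm
  exact Set.disjoint_left.2 fun ω hω hω' => (hω'.2 k h).not_gt hω.1

lemma mem_gridCrossing_iff : ω ∈ gridCrossing S T C n ↔ ∃ k ≤ 2 ^ n, C < S (dyadicPt T n k) ω := by
  classical
  simp only [gridCrossing, Set.mem_iUnion, Finset.mem_Iic, exists_prop]
  refine ⟨fun ⟨k, hk, hω⟩ => ⟨k, hk, hω.1⟩, fun ⟨k, hk, hCk⟩ => ?_⟩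
  have hex : ∃ m, C < S (dyadicPt T n m) ω := ⟨k, hCk⟩
  exact ⟨Nat.find hex, (Nat.find_min' hex hCk).trans hk, Nat.find_spec hex,
    fun j hj => not_lt.1 (Nat.find_min hex hj)⟩

lemma bddAbove_range_path (hpath : ContinuousOn (fun t => S t ω) (Icc 0 T)) :
    BddAbove (Set.range fun t : Icc (0 : ℝ) T => S t ω) := by
  simpa only [Set.image_eq_range] using isCompact_Icc.bddAbove_image hpath

lemma le_runMax (hpath : ContinuousOn (fun t => S t ω) (Icc 0 T)) {t : ℝ} (ht : t ∈ Icc 0 T) :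
    S t ω ≤ runMax S T ω :=
  le_ciSup (bddAbove_range_path hpath) (⟨t, ht⟩ : Icc (0 : ℝ) T)

lemma lt_runMax_iff (hT : 0 ≤ T) (hpath : ContinuousOn (fun t => S t ω) (Icc 0 T)) :
    C < runMax S T ω ↔ ∃ t ∈ Icc 0 T, C < S t ω := by
  have : Nonempty (Icc (0 : ℝ) T) := ⟨⟨0, left_mem_Icc.2 hT⟩⟩
  rw [runMax, lt_ciSup_iff (bddAbove_range_path hpath)]
  exact ⟨fun ⟨t, ht⟩ => ⟨t, t.2, ht⟩, fun ⟨t, ht, hCt⟩ => ⟨⟨t, ht⟩, hCt⟩⟩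

lemma eventually_mem_gridCrossing_iff (hT : 0 < T)
    (hpath : ContinuousOn (fun t => S t ω) (Icc 0 T)) :
    ∀ᶠ n in atTop, ω ∈ gridCrossing S T C n ↔ ω ∈ {ω | C < runMax S T ω} := by
  by_cases h : C < runMax S T ω
  · obtain ⟨t, ht, hCt⟩ := (lt_runMax_iff hT.le hpath).1 h
    filter_upwards [eventually_exists_dyadicPt_gt hT hpath ht hCt] with n hn
    exact iff_of_true (mem_gridCrossing_iff.2 hn) h
  · refine Eventually.of_forall fun n => iff_of_false (fun hω => h ?_) h
    obtain ⟨k, hk, hCk⟩ := mem_gridCrossing_iff.1 hω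
    exact hCk.trans_le (le_runMax hpath (dyadicPt_mem_Icc hT.le hk))

lemma eventually_notMem_gridOvershoot (hT : 0 < T)
    (hpath : ContinuousOn (fun t => S t ω) (Icc 0 T)) (h0 : S 0 ω ≤ C) {ε : ℝ} (hε : 0 < ε) :
    ∀ᶠ n in atTop, ω ∉ gridOvershoot S T C ε n := by
  filter_upwards [eventually_first_crossing_le hT hpath h0 hε] with n hn
  simp only [gridOvershoot, Set.mem_iUnion, Finset.mem_Iic, exists_prop, not_exists, not_and]
  exact fun k hk ⟨hω, hover⟩ => (hn k hk hω.1 hω.2).not_gt hover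

end Crossing

section Martingale

variable {Ω : Type} [mΩ : MeasurableSpace Ω] {ℙ : Measure Ω} {ℱ : Filtration ℝ mΩ}
  {S : ℝ → Ω → ℝ} {s₀ T C : ℝ} {n : ℕ}

lemma measurableSet_firstCrossing (hT : 0 ≤ T)
    (hadapted : ∀ t ∈ Icc 0 T, StronglyMeasurable[ℱ t] (S t)) {k : ℕ} (hk : k ≤ 2 ^ n) :
    MeasurableSet[ℱ (dyadicPt T n k)] (firstCrossing S T C n k) := by
  have hmeas : ∀ j ≤ k, Measurable[ℱ (dyadicPt T n k)] (S (dyadicPt T n j)) := fun j hj =>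
    ((hadapted _ (dyadicPt_mem_Icc hT (hj.trans hk))).mono
      (ℱ.mono (dyadicPt_mono hT n hj))).measurable
  simp only [firstCrossing, Set.ofPred_and, Set.ofPred_forall]
  exact (measurableSet_lt measurable_const (hmeas k le_rfl)).inter
    (MeasurableSet.iInter fun j => MeasurableSet.iInter fun hj =>
      measurableSet_le (hmeas j hj.le) measurable_const)

lemma measurableSet_gridCrossing (hT : 0 ≤ T)
    (hadapted : ∀ t ∈ Icc 0 T, StronglyMeasurable[ℱ t] (S t)) :
    MeasurableSet (gridCrossing S T C n) :=
  Finset.measurableSet_biUnion _ fun _ hk =>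
    ℱ.le _ _ (measurableSet_firstCrossing hT hadapted (Finset.mem_Iic.1 hk))

lemma measurableSet_gridOvershoot (hT : 0 ≤ T)
    (hadapted : ∀ t ∈ Icc 0 T, StronglyMeasurable[ℱ t] (S t)) {ε : ℝ} :
    MeasurableSet (gridOvershoot S T C ε n) :=
  Finset.measurableSet_biUnion _ fun _ hk => ℱ.le _ _ <|
    (measurableSet_firstCrossing hT hadapted (Finset.mem_Iic.1 hk)).inter
      (measurableSet_lt measurable_const
        (hadapted _ (dyadicPt_mem_Icc hT (Finset.mem_Iic.1 hk))).measurable)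

namespace IsNonnegContMart

lemma setIntegral_terminal [IsFiniteMeasure ℙ] (hS : IsNonnegContMart ℙ ℱ S s₀ T) (hT : 0 ≤ T)
    {t : ℝ} (ht : t ∈ Icc 0 T) {F : Set Ω} (hF : MeasurableSet[ℱ t] F) :
    ∫ ω in F, S T ω ∂ℙ = ∫ ω in F, S t ω ∂ℙ := by
  rw [← setIntegral_condExp (ℱ.le t) (hS.integrable T ⟨hT, le_rfl⟩) hF]
  exact setIntegral_congr_ae (ℱ.le t _ hF)
    ((hS.mart t T ht ⟨hT, le_rfl⟩ ht.2).mono fun ω h _ => h)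

lemma setIntegral_biUnion_eq_sum [IsFiniteMeasure ℙ] (hS : IsNonnegContMart ℙ ℱ S s₀ T)
    (hT : 0 ≤ T) {ι : Type*} (s : Finset ι) {τ : ι → ℝ} {F : ι → Set Ω}
    (hτ : ∀ i ∈ s, τ i ∈ Icc 0 T) (hF : ∀ i ∈ s, MeasurableSet[ℱ (τ i)] (F i))
    (hdisj : (s : Set ι).Pairwise (Disjoint on F)) :
    ∫ ω in ⋃ i ∈ s, F i, S T ω ∂ℙ = ∑ i ∈ s, ∫ ω in F i, S (τ i) ω ∂ℙ := by
  rw [integral_biUnion_finset s (fun i hi => ℱ.le _ _ (hF i hi)) hdisj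
    fun _ _ => (hS.integrable T ⟨hT, le_rfl⟩).integrableOn]
  exact Finset.sum_congr rfl fun i hi => hS.setIntegral_terminal hT (hτ i hi) (hF i hi)

lemma mul_measureReal_gridCrossing_le [IsFiniteMeasure ℙ] (hS : IsNonnegContMart ℙ ℱ S s₀ T)
    (hT : 0 ≤ T) :
    C * ℙ.real (gridCrossing S T C n) ≤ ∫ ω in gridCrossing S T C n, S T ω ∂ℙ := by
  have hτ k (hk : k ∈ Finset.Iic (2 ^ n)) := dyadicPt_mem_Icc hT (Finset.mem_Iic.1 hk)
  have hmeas k (hk : k ∈ Finset.Iic (2 ^ n)) :=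
    measurableSet_firstCrossing (C := C) hT hS.adapted (Finset.mem_Iic.1 hk)
  have hdisj := (pairwise_disjoint_firstCrossing S T C n).set_pairwise (Finset.Iic (2 ^ n))
  rw [gridCrossing, hS.setIntegral_biUnion_eq_sum hT _ hτ hmeas hdisj,
    measureReal_biUnion_finset hdisj fun k hk => ℱ.le _ _ (hmeas k hk), Finset.mul_sum]
  exact Finset.sum_le_sum fun k hk => setIntegral_ge_of_const_le_real (ℱ.le _ _ (hmeas k hk))
    (measure_ne_top _ _) (fun ω hω => hω.1.le) (hS.integrable _ (hτ k hk)).integrableOn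

lemma setIntegral_gridCrossing_le [IsFiniteMeasure ℙ] (hS : IsNonnegContMart ℙ ℱ S s₀ T)
    (hT : 0 ≤ T) {ε : ℝ} (hCε : 0 ≤ C + ε) :
    ∫ ω in gridCrossing S T C n, S T ω ∂ℙ ≤
      (C + ε) * ℙ.real (gridCrossing S T C n) + ∫ ω in gridOvershoot S T C ε n, S T ω ∂ℙ := by
  have hτ k (hk : k ∈ Finset.Iic (2 ^ n)) := dyadicPt_mem_Icc hT (Finset.mem_Iic.1 hk)
  have hmeas k (hk : k ∈ Finset.Iic (2 ^ n)) :=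
    measurableSet_firstCrossing (C := C) hT hS.adapted (Finset.mem_Iic.1 hk)
  have hover k (hk : k ∈ Finset.Iic (2 ^ n)) :
      MeasurableSet[ℱ (dyadicPt T n k)] {ω | C + ε < S (dyadicPt T n k) ω} :=
    measurableSet_lt measurable_const (hS.adapted _ (hτ k hk)).measurable
  have hdisj := pairwise_disjoint_firstCrossing S T C n
  rw [gridCrossing, gridOvershoot,
    hS.setIntegral_biUnion_eq_sum hT _ hτ hmeas (hdisj.set_pairwise _),
    hS.setIntegral_biUnion_eq_sum hT _ hτ (fun k hk => (hmeas k hk).inter (hover k hk))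
      ((hdisj.mono fun _ _ h => h.mono inter_subset_left inter_subset_left).set_pairwise _),
    measureReal_biUnion_finset (hdisj.set_pairwise _) fun k hk => ℱ.le _ _ (hmeas k hk),
    Finset.mul_sum, ← Finset.sum_add_distrib]
  refine Finset.sum_le_sum fun k hk => ?_
  have hint := (hS.integrable _ (hτ k hk)).integrableOn (s := firstCrossing S T C n k)
  rw [← integral_inter_add_sdiff (ℱ.le _ _ (hover k hk)) hint, add_comm]
  gcongr
  calc ∫ ω in firstCrossing S T C n k \ {ω | C + ε < S (dyadicPt T n k) ω},
          S (dyadicPt T n k) ω ∂ℙ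
      ≤ ∫ _ in firstCrossing S T C n k \ {ω | C + ε < S (dyadicPt T n k) ω}, (C + ε) ∂ℙ :=
        setIntegral_mono_on (hint.mono_set sdiff_subset) (integrableOn_const (measure_ne_top _ _))
          ((ℱ.le _ _ (hmeas k hk)).diff (ℱ.le _ _ (hover k hk))) fun ω hω => not_lt.1 hω.2
    _ = (C + ε) * ℙ.real (firstCrossing S T C n k \ {ω | C + ε < S (dyadicPt T n k) ω}) := by
        rw [setIntegral_const, smul_eq_mul, mul_comm]
    _ ≤ (C + ε) * ℙ.real (firstCrossing S T C n k) := by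
        gcongr
        · exact measure_ne_top _ _
        · exact sdiff_subset

lemma measurableSet_lt_runMax (hS : IsNonnegContMart ℙ ℱ S s₀ T) (hT : 0 < T) :
    MeasurableSet {ω | C < runMax S T ω} :=
  measurableSet_of_tendsto_indicator atTop (fun _ => measurableSet_gridCrossing hT.le hS.adapted)
    fun ω => eventually_mem_gridCrossing_iff hT (hS.contPaths ω)

theorem setIntegral_lt_runMax [IsProbabilityMeasure ℙ] (hS : IsNonnegContMart ℙ ℱ S s₀ T)
    (hT : 0 < T) (hC₀ : 0 ≤ C) (hC : s₀ < C) :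
    ∫ ω in {ω | C < runMax S T ω}, S T ω ∂ℙ = C * ℙ.real {ω | C < runMax S T ω} := by
  have hint := hS.integrable T ⟨hT.le, le_rfl⟩
  have hcross : ∀ᵐ ω ∂ℙ, ∀ᶠ n in atTop,
      ω ∈ gridCrossing S T C n ↔ ω ∈ {ω | C < runMax S T ω} :=
    ae_of_all _ fun ω => eventually_mem_gridCrossing_iff hT (hS.contPaths ω)
  have hmeas n := measurableSet_gridCrossing (n := n) (C := C) hT.le hS.adapted
  have hI := tendsto_setIntegral_of_ae_eventually_mem_iff hmeas hint hcross
  have hP := tendsto_measureReal_of_ae_eventually_mem_iff hmeas hcross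
  refine le_antisymm (le_of_forall_pos_le_add fun ε hε => ?_)
    (le_of_tendsto_of_tendsto' (hP.const_mul C) hI fun _ =>
      hS.mul_measureReal_gridCrossing_le hT.le)
  have hover : Tendsto (fun n => ∫ ω in gridOvershoot S T C ε n, S T ω ∂ℙ) atTop (𝓝 0) := by
    have hvanish : ∀ᵐ ω ∂ℙ, ∀ᶠ n in atTop, ω ∈ gridOvershoot S T C ε n ↔ ω ∈ (∅ : Set Ω) := by
      filter_upwards [hS.init] with ω hω
      simpa using eventually_notMem_gridOvershoot hT (hS.contPaths ω) (hω ▸ hC.le) hε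
    simpa using tendsto_setIntegral_of_ae_eventually_mem_iff
      (fun _ => measurableSet_gridOvershoot hT.le hS.adapted) hint hvanish
  have hup := le_of_tendsto_of_tendsto' hI ((hP.const_mul (C + ε)).add hover)
    fun n => hS.setIntegral_gridCrossing_le hT.le (by linarith)
  nlinarith [measureReal_le_one (μ := ℙ) (s := {ω | C < runMax S T ω})]

end IsNonnegContMart

end Martingale

/-- For `B > s₀`, `E[S_T·1_{M_T ≥ B}] = B·ℙ(M_T ≥ B)`. -/
theorem stmt_16 {Ω : Type} [mΩ : MeasurableSpace Ω] (ℙ : Measure Ω) [IsProbabilityMeasure ℙ]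
    (ℱ : Filtration ℝ mΩ) (S : ℝ → Ω → ℝ) (s₀ T : ℝ) (hs₀ : 0 < s₀) (hT : 0 < T)
    (hS : IsNonnegContMart ℙ ℱ S s₀ T) (B : ℝ) (hB : s₀ < B) :
    (∫ ω in {ω | B ≤ runMax S T ω}, S T ω ∂ℙ)
      = B * (ℙ {ω | B ≤ runMax S T ω}).toReal := by
  set C : ℕ → ℝ := fun k => B - 1 / ((k : ℝ) + 1)
  have hC : Tendsto C atTop (𝓝 B) := by
    simpa [C] using
      (tendsto_const_nhds (x := B)).sub (tendsto_one_div_add_atTop_nhds_zero_nat (𝕜 := ℝ))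
  have hCB k : C k < B := sub_lt_self B (by positivity)
  have hlevels : ∀ᵐ ω ∂ℙ, ∀ᶠ k in atTop,
      ω ∈ {ω | C k < runMax S T ω} ↔ ω ∈ {ω | B ≤ runMax S T ω} :=
    ae_of_all _ fun ω => eventually_lt_iff_le_of_tendsto hC hCB _
  have hmeas k := hS.measurableSet_lt_runMax (C := C k) hT
  have hkey : ∀ᶠ k in atTop, ∫ ω in {ω | C k < runMax S T ω}, S T ω ∂ℙ =
      C k * ℙ.real {ω | C k < runMax S T ω} := by
    filter_upwards [hC.eventually (lt_mem_nhds hB)] with k hk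
    exact hS.setIntegral_lt_runMax hT (hs₀.trans hk).le hk
  rw [← measureReal_def]
  exact tendsto_nhds_unique
    ((tendsto_setIntegral_of_ae_eventually_mem_iff hmeas (hS.integrable T ⟨hT.le, le_rfl⟩)
      hlevels).congr' hkey)
    (hC.mul (tendsto_measureReal_of_ae_eventually_mem_iff hmeas hlevels))
end
end
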